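/- Let π be a permutation of {0,…,n−1} whose run starts form a set S' of size r', with every run of length at most L. For an index j, define F(j) as the number of elements of S' lying in the half-open output interval of run j (the image under π of run j). Then the sum over all runs j of F(j) is at most r', and consequently the total number of fast forwards over all n distinct move queries is at most L · r'. -/

import Mathlib

/-!
Inside a run, `π` is a translation, so the output interval of the run starting at `s` is exactly
the `π`-image of the run. The runs are pairwise disjoint and `π` is injective, hence so are the
output intervals, and every run start is counted by at most one `F(j)`: `∑ F(j) ≤ r'`. A query
at position `i` costs `F` of the run containing `i`, and each run contains at most `L` positions,
which gives the bound `L · r'`.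
-/

/-- The set of run starts of the permutation `π` of `{0,…,n-1}`. -/
def runStarts (n : ℕ) (π : ℕ → ℕ) : Finset ℕ :=
  (Finset.range n).filter (fun i => i = 0 ∨ π (i - 1) + 1 ≠ π i)

/-- Length of the run starting at `s`: distance to the next run start (or to `n`). -/
noncomputable def runLen (n : ℕ) (S : Finset ℕ) (s : ℕ) : ℕ :=
  sInf ({t : ℕ | t ∈ S ∧ s < t} ∪ {n}) - s

/-- Predecessor of `i` among the run starts `S`. -/
noncomputable def predIn (S : Finset ℕ) (i : ℕ) : ℕ :=
  sSup {s : ℕ | s ∈ S ∧ s ≤ i}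

/-- `F j`: number of run starts lying in the output interval of the run starting at `s`. -/
noncomputable def ffCount (n : ℕ) (π : ℕ → ℕ) (S : Finset ℕ) (s : ℕ) : ℕ :=
  (S.filter (fun t => π s ≤ t ∧ t < π s + runLen n S s)).card

open Finset

theorem sum_card_filter_le_card {ι α : Type*} (S : Finset ι) (T : Finset α)
    (p : ι → α → Prop) [∀ i, DecidablePred (p i)]
    (hp : ∀ i ∈ S, ∀ j ∈ S, i ≠ j → ∀ a, p i a → ¬ p j a) :
    ∑ i ∈ S, #{a ∈ T | p i a} ≤ #T := by
  classical
  rw [← card_biUnion fun i hi j hj hij => disjoint_filter.mpr fun a _ => hp i hi j hj hij a]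
  exact card_le_card (biUnion_subset.mpr fun _ _ => filter_subset _ _)

noncomputable def runEnd (n : ℕ) (S : Finset ℕ) (s : ℕ) : ℕ :=
  sInf ({t : ℕ | t ∈ S ∧ s < t} ∪ {n})

section RunEnd

variable {n : ℕ} {S : Finset ℕ} {s t : ℕ}

theorem runLen_eq_runEnd_sub : runLen n S s = runEnd n S s - s := rfl

theorem runEnd_le : runEnd n S s ≤ n :=
  Nat.sInf_le (Or.inr rfl)

theorem runEnd_le_of_mem (ht : t ∈ S) (hst : s < t) : runEnd n S s ≤ t :=
  Nat.sInf_le (Or.inl ⟨ht, hst⟩)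

theorem runEnd_mem_and_lt_or_eq :
    (runEnd n S s ∈ S ∧ s < runEnd n S s) ∨ runEnd n S s = n :=
  Nat.sInf_mem (⟨n, Or.inr rfl⟩ : ({t : ℕ | t ∈ S ∧ s < t} ∪ {n} : Set ℕ).Nonempty)

theorem lt_runEnd (hs : s < n) : s < runEnd n S s := by
  rcases runEnd_mem_and_lt_or_eq (n := n) (S := S) (s := s) with h | h
  · exact h.2
  · omega

theorem notMem_of_lt_runEnd (hst : s < t) (ht : t < runEnd n S s) : t ∉ S :=
  fun htS => (runEnd_le_of_mem htS hst).not_gt ht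

theorem disjoint_Ico_runEnd (hs : s ∈ S) (ht : t ∈ S) (hne : s ≠ t) :
    Disjoint (Ico s (runEnd n S s)) (Ico t (runEnd n S t)) := by
  rw [disjoint_left]
  intro i hi hi'
  rw [mem_Ico] at hi hi'
  rcases hne.lt_or_gt with hlt | hlt
  · have := runEnd_le_of_mem (n := n) ht hlt; omega
  · have := runEnd_le_of_mem (n := n) hs hlt; omega

end RunEnd

section PredIn

variable {n : ℕ} {S : Finset ℕ} {i : ℕ}

theorem predIn_mem_and_le (h0 : 0 ∈ S) : predIn S i ∈ S ∧ predIn S i ≤ i :=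
  Nat.sSup_mem (s := {s | s ∈ S ∧ s ≤ i}) ⟨0, h0, i.zero_le⟩ ⟨i, fun _ hx => hx.2⟩

theorem lt_runEnd_predIn (h0 : 0 ∈ S) (hi : i < n) : i < runEnd n S (predIn S i) := by
  have hle := (predIn_mem_and_le (i := i) h0).2
  by_contra! hend
  rcases runEnd_mem_and_lt_or_eq (n := n) (S := S) (s := predIn S i) with ⟨hS, hlt⟩ | h
  · have : runEnd n S (predIn S i) ≤ predIn S i :=
      le_csSup ⟨i, fun _ hx => hx.2⟩ ⟨hS, hend⟩
    omega
  · omega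

theorem sum_range_comp_predIn_le (f : ℕ → ℕ) (h0 : 0 < n → 0 ∈ S) :
    ∑ i ∈ range n, f (predIn S i) ≤ ∑ s ∈ S, runLen n S s * f s := by
  rw [← sum_fiberwise_of_maps_to (g := predIn S) (t := S)
    fun i hi => (predIn_mem_and_le (h0 (Nat.zero_lt_of_lt (mem_range.mp hi)))).1]
  refine sum_le_sum fun s _ => ?_
  rw [sum_congr rfl fun i hi => congrArg f (mem_filter.mp hi).2, sum_const, smul_eq_mul]
  refine Nat.mul_le_mul_right _ ?_
  have hfiber : {i ∈ range n | predIn S i = s} ⊆ Ico s (runEnd n S s) := by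
    intro i hi
    obtain ⟨hin, rfl⟩ := mem_filter.mp hi
    have hin : i < n := mem_range.mp hin
    exact mem_Ico.mpr ⟨(predIn_mem_and_le (h0 (Nat.zero_lt_of_lt hin))).2,
      lt_runEnd_predIn (h0 (Nat.zero_lt_of_lt hin)) hin⟩
  exact (card_le_card hfiber).trans_eq (Nat.card_Ico _ _)

end PredIn

section RunStarts

variable {n : ℕ} {π : ℕ → ℕ}

theorem zero_mem_runStarts (hn : 0 < n) : 0 ∈ runStarts n π := by
  simp [runStarts, hn]

theorem map_succ_of_succ_notMem_runStarts {i : ℕ} (hi : i + 1 < n)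
    (h : i + 1 ∉ runStarts n π) : π (i + 1) = π i + 1 := by
  simpa [runStarts, hi, eq_comm] using h

theorem map_add_of_lt_runEnd (s : ℕ) :
    ∀ k, s + k < runEnd n (runStarts n π) s → π (s + k) = π s + k
  | 0, _ => rfl
  | k + 1, hk => by
    have hk' : s + k + 1 < runEnd n (runStarts n π) s := hk
    rw [← add_assoc, map_succ_of_succ_notMem_runStarts (hk'.trans_le runEnd_le)
      (notMem_of_lt_runEnd (by omega) hk'), map_add_of_lt_runEnd s k (by omega), add_assoc]

theorem exists_mem_Ico_runEnd_map_eq {s t : ℕ}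
    (ht : π s ≤ t ∧ t < π s + runLen n (runStarts n π) s) :
    ∃ i ∈ Ico s (runEnd n (runStarts n π) s), π i = t := by
  rw [runLen_eq_runEnd_sub] at ht
  refine ⟨s + (t - π s), mem_Ico.mpr ⟨by omega, by omega⟩, ?_⟩
  rw [map_add_of_lt_runEnd (n := n) (π := π) s (t - π s) (by omega)]
  omega

theorem outputInterval_disjoint (hπ : Set.InjOn π (Set.Iio n)) {s s' : ℕ}
    (hs : s ∈ runStarts n π) (hs' : s' ∈ runStarts n π) (hne : s ≠ s') (t : ℕ)
    (ht : π s ≤ t ∧ t < π s + runLen n (runStarts n π) s) :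
    ¬ (π s' ≤ t ∧ t < π s' + runLen n (runStarts n π) s') := by
  intro ht'
  obtain ⟨i, hi, rfl⟩ := exists_mem_Ico_runEnd_map_eq ht
  obtain ⟨i', hi', hii'⟩ := exists_mem_Ico_runEnd_map_eq ht'
  have hlt : ∀ {j r}, j ∈ Ico r (runEnd n (runStarts n π) r) → j ∈ Set.Iio n :=
    fun hj => (mem_Ico.mp hj).2.trans_le runEnd_le
  rw [← hπ (hlt hi') (hlt hi) hii'] at hi
  exact disjoint_left.mp (disjoint_Ico_runEnd hs hs' hne) hi hi'

end RunStarts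

theorem sum_ffCount_le_card {n : ℕ} {π : ℕ → ℕ} (hπ : Set.InjOn π (Set.Iio n)) :
    ∑ s ∈ runStarts n π, ffCount n π (runStarts n π) s ≤ #(runStarts n π) :=
  sum_card_filter_le_card _ _ _ fun _ hs _ hs' hne => outputInterval_disjoint hπ hs hs' hne

theorem statement_3_general (n L : ℕ) (π : ℕ → ℕ)
    (hπ : Set.BijOn π (Set.Iio n) (Set.Iio n))
    (hcap : ∀ s ∈ runStarts n π, runLen n (runStarts n π) s ≤ L) :
    (∑ s ∈ runStarts n π, ffCount n π (runStarts n π) s) ≤ (runStarts n π).card ∧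
    (∑ i ∈ Finset.range n, ffCount n π (runStarts n π) (predIn (runStarts n π) i))
      ≤ L * (runStarts n π).card := by
  set S := runStarts n π
  refine ⟨sum_ffCount_le_card hπ.injOn, ?_⟩
  calc ∑ i ∈ range n, ffCount n π S (predIn S i)
      ≤ ∑ s ∈ S, runLen n S s * ffCount n π S s :=
        sum_range_comp_predIn_le _ zero_mem_runStarts
    _ ≤ ∑ s ∈ S, L * ffCount n π S s :=
        sum_le_sum fun s hs => Nat.mul_le_mul_right _ (hcap s hs)
    _ = L * ∑ s ∈ S, ffCount n π S s := (mul_sum _ _ _).symm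
    _ ≤ L * #S := Nat.mul_le_mul_left _ (sum_ffCount_le_card hπ.injOn)

/-- The sum over all runs of `F(j)` is at most `r'`, and the total number of fast
forwards over all `n` distinct move queries is at most `L · r'`. -/
theorem statement_3 (n L : ℕ) (hn : 0 < n) (π : ℕ → ℕ)
    (hπ : Set.BijOn π (Set.Iio n) (Set.Iio n))
    (hcap : ∀ s ∈ runStarts n π, runLen n (runStarts n π) s ≤ L) :
    (∑ s ∈ runStarts n π, ffCount n π (runStarts n π) s) ≤ (runStarts n π).card ∧
    (∑ i ∈ Finset.range n, ffCount n π (runStarts n π) (predIn (runStarts n π) i))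
      ≤ L * (runStarts n π).card :=
  statement_3_general n L π hπ hcap
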